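/- Suppose Γ is an E-complete maximally tableau FOLP_CS-consistent set of closed Par-formulas, and let E be defined by E(t) = { A : ¬t:_{Par(A)} A ∉ Γ }. Then E satisfies condition E2: if A ∈ E(t) and A→B ∈ E(s), then B ∈ E(s·t). -/

import Mathlib

open scoped Classical

/-- Justification terms of FOLP, built from justification variables `jvar i`,
justification constants `jconst i`, and the operations `+`, `·`, `!`, `genₓ`. -/
inductive Tm : Type
  | jvar : ℕ → Tm
  | jconst : ℕ → Tm
  | plus : Tm → Tm → Tm
  | app : Tm → Tm → Tm
  | bang : Tm → Tm
  | gen : ℕ → Tm → Tm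
  deriving DecidableEq

/-- FOLP formulas with extra individual constants from `K` (`K`-formulas).
Individual variables are natural numbers; an argument `Sum.inl x` is an individual
variable, `Sum.inr a` is an element of `K`.  Predicate symbols are indexed by `ℕ`.
Plain FOLP formulas are `Fm Empty`, Par-formulas are `Fm ℕ` (the parameters being a
separate copy of ℕ, namely the `Sum.inr` part), and `D`-formulas are `Fm D`.
`just t X A` is the justification assertion `t :_X A`. -/
inductive Fm (K : Type) : Type
  | pred : ℕ → List (ℕ ⊕ K) → Fm K
  | neg : Fm K → Fm K
  | imp : Fm K → Fm K → Fm K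
  | all : ℕ → Fm K → Fm K
  | ex : ℕ → Fm K → Fm K
  | just : Tm → Finset (ℕ ⊕ K) → Fm K → Fm K

namespace Fm

variable {K K' : Type}

/-- Free individual variables of a `K`-formula.  Recall that
`FVar (t :_X A) = X` (more precisely, the individual-variable part of `X`). -/
noncomputable def fvar : Fm K → Finset ℕ
  | pred _ args => (args.filterMap Sum.getLeft?).toFinset
  | neg A => A.fvar
  | imp A B => A.fvar ∪ B.fvar
  | all x A => A.fvar.erase x
  | ex x A => A.fvar.erase x
  | just _ X _ => (X.toList.filterMap Sum.getLeft?).toFinset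

/-- The elements of `K` occurring in a `K`-formula (for `K = Par` this is `Par(A)`,
for `K = D` this is `D(A)`). -/
noncomputable def kocc : Fm K → Finset K
  | pred _ args => (args.filterMap Sum.getRight?).toFinset
  | neg A => A.kocc
  | imp A B => A.kocc ∪ B.kocc
  | all _ A => A.kocc
  | ex _ A => A.kocc
  | just _ X A => A.kocc ∪ (X.toList.filterMap Sum.getRight?).toFinset

/-- A `K`-formula is closed if it contains no free occurrences of individual variables. -/
def Closed (A : Fm K) : Prop := A.fvar = ∅

/-- Action of a partial substitution (of elements of `K` for individual variables)
on variables/`K`-elements. -/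
def subK (σ : ℕ → Option K) : ℕ ⊕ K → ℕ ⊕ K
  | .inl x => (σ x).elim (.inl x) .inr
  | .inr a => .inr a

/-- Simultaneous substitution of elements of `K` for free individual variables.
In `t :_X A` only the variables belonging to `X` are free, so only those get
substituted (both inside `X` and inside `A`). -/
noncomputable def msubst (σ : ℕ → Option K) : Fm K → Fm K
  | pred Q args => pred Q (args.map (subK σ))
  | neg A => neg (A.msubst σ)
  | imp A B => imp (A.msubst σ) (B.msubst σ)
  | all x A => all x (A.msubst fun y => if y = x then none else σ y)
  | ex x A => ex x (A.msubst fun y => if y = x then none else σ y)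
  | just t X A =>
      just t (X.image (subK σ)) (A.msubst fun y => if Sum.inl y ∈ X then σ y else none)

/-- `A.subst1 x a` is `A(a)`, i.e. `A{x/a}`: the result of replacing all free
occurrences of the individual variable `x` by the element `a : K`. -/
noncomputable def subst1 (x : ℕ) (a : K) (A : Fm K) : Fm K :=
  A.msubst fun y => if y = x then some a else none

/-- Action of a variable-for-variable substitution on arguments. -/
def subVV (x y : ℕ) : ℕ ⊕ K → ℕ ⊕ K
  | .inl z => if z = x then .inl y else .inl z
  | .inr a => .inr a

/-- `A.vsubst x y` is `A{x/y}`: substitution of the individual variable `y` for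
the free occurrences of the individual variable `x`. -/
noncomputable def vsubst (x y : ℕ) : Fm K → Fm K
  | pred Q args => pred Q (args.map (subVV x y))
  | neg A => neg (A.vsubst x y)
  | imp A B => imp (A.vsubst x y) (B.vsubst x y)
  | all z A => if z = x then all z A else all z (A.vsubst x y)
  | ex z A => if z = x then ex z A else ex z (A.vsubst x y)
  | just t X A =>
      if Sum.inl x ∈ X then just t (X.image (subVV x y)) (A.vsubst x y) else just t X A

/-- `FreeFor y x A`: the variable `y` is substitutable for the variable `x` in `A`
(no free occurrence of `x` lies in the scope of a quantifier binding `y`). -/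
def FreeFor (y x : ℕ) : Fm K → Prop
  | pred _ _ => True
  | neg A => FreeFor y x A
  | imp A B => FreeFor y x A ∧ FreeFor y x B
  | all z A => x = z ∨ x ∉ A.fvar ∨ (y ≠ z ∧ FreeFor y x A)
  | ex z A => x = z ∨ x ∉ A.fvar ∨ (y ≠ z ∧ FreeFor y x A)
  | just _ X A => Sum.inl x ∈ X → FreeFor y x A

/-- Action of a renaming on arguments. -/
def subR (σ : ℕ → ℕ) : ℕ ⊕ K → ℕ ⊕ K
  | .inl x => .inl (σ x)
  | .inr a => .inr a

/-- Renaming of all (free and bound) individual variables. -/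
noncomputable def rename (σ : ℕ → ℕ) : Fm K → Fm K
  | pred Q args => pred Q (args.map (subR σ))
  | neg A => neg (A.rename σ)
  | imp A B => imp (A.rename σ) (B.rename σ)
  | all x A => all (σ x) (A.rename σ)
  | ex x A => ex (σ x) (A.rename σ)
  | just t X A => just t (X.image (subR σ)) (A.rename σ)

/-- Mapping the extra individual constants of a `K`-formula along `f : K → K'`. -/
noncomputable def kmap (f : K → K') : Fm K → Fm K'
  | pred Q args => pred Q (args.map (Sum.map id f))
  | neg A => neg (A.kmap f)
  | imp A B => imp (A.kmap f) (B.kmap f)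
  | all x A => all x (A.kmap f)
  | ex x A => ex x (A.kmap f)
  | just t X A => just t (X.image (Sum.map id f)) (A.kmap f)

/-- A size measure used for the well-founded recursion defining truth. -/
noncomputable def size : Fm K → ℕ
  | pred _ _ => 0
  | neg A => A.size + 1
  | imp A B => A.size + B.size + 1
  | all _ A => A.size + 1
  | ex _ A => A.size + 1
  | just _ _ A => A.size + A.fvar.card + 1


theorem fvar_msubst_subset (σ : ℕ → Option K) (A : Fm K) :
    (A.msubst σ).fvar ⊆ A.fvar := by
  induction A generalizing σ with
  | pred Q args =>
      intro y hy
      simp only [msubst, fvar, List.mem_toFinset, List.mem_filterMap, List.mem_map] at hy ⊢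
      obtain ⟨s, ⟨a, ha, rfl⟩, hget⟩ := hy
      cases a with
      | inl z =>
          cases hσ : σ z with
          | none =>
              simp [subK, hσ] at hget
              exact ⟨Sum.inl z, ha, by simp [hget]⟩
          | some b => simp [subK, hσ] at hget
      | inr b => simp [subK] at hget
  | neg A ih => exact ih σ
  | imp A B ihA ihB =>
      simp only [msubst, fvar]
      exact Finset.union_subset_union (ihA σ) (ihB σ)
  | all x A ih =>
      simp only [msubst, fvar]
      exact Finset.erase_subset_erase x (ih _)
  | ex x A ih =>
      simp only [msubst, fvar]
      exact Finset.erase_subset_erase x (ih _)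
  | just t X A ih =>
      intro y hy
      simp only [msubst, fvar, List.mem_toFinset, List.mem_filterMap,
        Finset.mem_toList, Finset.mem_image] at hy ⊢
      obtain ⟨s, ⟨a, ha, rfl⟩, hget⟩ := hy
      cases a with
      | inl z =>
          cases hσ : σ z with
          | none =>
              refine ⟨Sum.inl z, ha, ?_⟩
              simp only [subK, hσ, Option.elim] at hget
              simpa using hget
          | some b => simp [subK, hσ] at hget
      | inr b => simp [subK] at hget

theorem size_msubst_le (σ : ℕ → Option K) (A : Fm K) :
    (A.msubst σ).size ≤ A.size := by
  induction A generalizing σ with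
  | pred Q args => simp [msubst, size]
  | neg A ih => simpa [msubst, size] using ih σ
  | imp A B ihA ihB =>
      simp only [msubst, size]
      have := ihA σ; have := ihB σ; omega
  | all x A ih => simpa [msubst, size] using ih _
  | ex x A ih => simpa [msubst, size] using ih _
  | just t X A ih =>
      simp only [msubst, size]
      have h1 := ih (fun y => if Sum.inl y ∈ X then σ y else none)
      have h2 := Finset.card_le_card
        (fvar_msubst_subset (fun y => if Sum.inl y ∈ X then σ y else none) A)
      omega

theorem size_subst1_le (x : ℕ) (a : K) (A : Fm K) : (A.subst1 x a).size ≤ A.size :=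
  size_msubst_le _ A


/-- `∀A`, the universal closure of `A`. -/
noncomputable def univClosure (A : Fm K) : Fm K :=
  (A.fvar.sort (· ≤ ·)).foldr Fm.all A

theorem size_foldr_all (l : List ℕ) (A : Fm K) :
    (l.foldr Fm.all A).size = A.size + l.length := by
  induction l with
  | nil => simp
  | cons z l ih => simp only [List.foldr, size, ih, List.length_cons]; omega

theorem size_univClosure (A : Fm K) :
    A.univClosure.size = A.size + A.fvar.card := by
  simp [univClosure, size_foldr_all, Finset.length_sort]

end Fm

/-- Embedding plain FOLP formulas into `K`-formulas. -/
noncomputable def toK {K : Type} : Fm Empty → Fm K := Fm.kmap (fun a => a.elim)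

/-- Two FOLP formulas are variable variants if each can be turned into the other
by a renaming of free and bound individual variables. -/
def VariableVariant (A B : Fm Empty) : Prop := ∃ σ : Equiv.Perm ℕ, B = A.rename σ

/-- The axioms of FOLP: a complete list of first order axiom schemes together
with the justification axiom schemes Ctr, Exp, Sum, jK, jT, j4, Gen. -/
inductive FOLPAxiom : Fm Empty → Prop
  | p1 (A B : Fm Empty) : FOLPAxiom (A.imp (B.imp A))
  | p2 (A B C : Fm Empty) : FOLPAxiom ((A.imp (B.imp C)).imp ((A.imp B).imp (A.imp C)))
  | p3 (A B : Fm Empty) : FOLPAxiom (((A.neg).imp (B.neg)).imp (B.imp A))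
  | allElim (x y : ℕ) (A : Fm Empty) : Fm.FreeFor y x A → FOLPAxiom ((Fm.all x A).imp (A.vsubst x y))
  | allImp (x : ℕ) (A B : Fm Empty) : x ∉ A.fvar →
      FOLPAxiom ((Fm.all x (A.imp B)).imp (A.imp (Fm.all x B)))
  | exIntro (x y : ℕ) (A : Fm Empty) : Fm.FreeFor y x A → FOLPAxiom ((A.vsubst x y).imp (Fm.ex x A))
  | exElim (x : ℕ) (A B : Fm Empty) : x ∉ B.fvar →
      FOLPAxiom ((Fm.all x (A.imp B)).imp ((Fm.ex x A).imp B))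
  | ctr (t : Tm) (X : Finset (ℕ ⊕ Empty)) (A : Fm Empty) (y : ℕ) : Sum.inl y ∉ X → y ∉ A.fvar →
      FOLPAxiom ((Fm.just t (insert (Sum.inl y) X) A).imp (Fm.just t X A))
  | exp (t : Tm) (X : Finset (ℕ ⊕ Empty)) (A : Fm Empty) (y : ℕ) : Sum.inl y ∉ X →
      FOLPAxiom ((Fm.just t X A).imp (Fm.just t (insert (Sum.inl y) X) A))
  | sum1 (s t : Tm) (X : Finset (ℕ ⊕ Empty)) (A : Fm Empty) : FOLPAxiom ((Fm.just s X A).imp (Fm.just (Tm.plus s t) X A))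
  | sum2 (s t : Tm) (X : Finset (ℕ ⊕ Empty)) (A : Fm Empty) : FOLPAxiom ((Fm.just s X A).imp (Fm.just (Tm.plus t s) X A))
  | jK (s t : Tm) (X : Finset (ℕ ⊕ Empty)) (A B : Fm Empty) : FOLPAxiom ((Fm.just s X (A.imp B)).imp
      ((Fm.just t X A).imp (Fm.just (Tm.app s t) X B)))
  | jT (t : Tm) (X : Finset (ℕ ⊕ Empty)) (A : Fm Empty) : FOLPAxiom ((Fm.just t X A).imp A)
  | j4 (t : Tm) (X : Finset (ℕ ⊕ Empty)) (A : Fm Empty) : FOLPAxiom ((Fm.just t X A).imp (Fm.just (Tm.bang t) X (Fm.just t X A)))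
  | gen (t : Tm) (X : Finset (ℕ ⊕ Empty)) (A : Fm Empty) (x : ℕ) : Sum.inl x ∉ X →
      FOLPAxiom ((Fm.just t X A).imp (Fm.just (Tm.gen x t) X (Fm.all x A)))

/-- A constant specification is a set of pairs `(c, A)`, read `c : A`
(that is, `c :_∅ A`), where `A` is an axiom instance. -/
def ConstantSpec (CS : Set (ℕ × Fm Empty)) : Prop := ∀ p ∈ CS, FOLPAxiom p.2

/-- `CS` is axiomatically appropriate: every axiom instance has a constant justifying it. -/
def AxiomaticallyAppropriate (CS : Set (ℕ × Fm Empty)) : Prop :=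
  ∀ A, FOLPAxiom A → ∃ c, (c, A) ∈ CS

/-- `CS` is variant closed. -/
def VariantClosed (CS : Set (ℕ × Fm Empty)) : Prop :=
  ∀ c A B, VariableVariant A B → ((c, A) ∈ CS ↔ (c, B) ∈ CS)

/-- Derivability in the axiomatic system `FOLP_CS`:  axioms, axiom necessitation
restricted to `CS`, modus ponens, and universal generalization. -/
inductive Deriv (CS : Set (ℕ × Fm Empty)) : Fm Empty → Prop
  | ax {A : Fm Empty} : FOLPAxiom A → Deriv CS A
  | an {c : ℕ} {A : Fm Empty} : (c, A) ∈ CS → Deriv CS (Fm.just (Tm.jconst c) ∅ A)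
  | mp {A B : Fm Empty} : Deriv CS (A.imp B) → Deriv CS A → Deriv CS B
  | ug {A : Fm Empty} (x : ℕ) : Deriv CS A → Deriv CS (Fm.all x A)

/-- A Mkrtychev model of `FOLP_CS` with domain `D`:  an interpretation `I` of the
predicate symbols and an admissible evidence function `E` satisfying E1–E6. -/
structure MModel (CS : Set (ℕ × Fm Empty)) (D : Type) : Type where
  dom_nonempty : Nonempty D
  I : ℕ → Set (List D)
  E : Tm → Set (Fm D)
  e1 : ∀ c A, (c, A) ∈ CS → toK A ∈ E (Tm.jconst c)
  e2 : ∀ s t (A B : Fm D), Fm.imp A B ∈ E s → A ∈ E t → B ∈ E (Tm.app s t)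
  e3 : ∀ s t, E s ∪ E t ⊆ E (Tm.plus s t)
  e4 : ∀ t (A : Fm D) (X : Finset D), A ∈ E t → A.kocc ⊆ X →
      Fm.just t (X.image Sum.inr) A ∈ E (Tm.bang t)
  e5 : ∀ t (x : ℕ) (A : Fm D), A ∈ E t → Fm.all x A ∈ E (Tm.gen x t)
  e6 : ∀ t (A : Fm D) (x : ℕ) (a : D), A ∈ E t → A.subst1 x a ∈ E t

/-- Truth of a (closed) `D`-formula in a Mkrtychev model. -/
noncomputable def MModel.Sat {CS : Set (ℕ × Fm Empty)} {D : Type} (M : MModel CS D) :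
    Fm D → Prop
  | .pred Q args => ∃ as : List D, args = as.map Sum.inr ∧ as ∈ M.I Q
  | .neg A => ¬ M.Sat A
  | .imp A B => M.Sat A → M.Sat B
  | .all x A => ∀ a : D, M.Sat (A.subst1 x a)
  | .ex x A => ∃ a : D, M.Sat (A.subst1 x a)
  | .just t _ A => A ∈ M.E t ∧ M.Sat A.univClosure
  termination_by F => F.size
  decreasing_by
    all_goals simp only [Fm.size, Fm.size_univClosure]
    all_goals first
      | omega
      | exact Nat.lt_succ_of_le (Fm.size_subst1_le _ _ _)

/-- Truth of an FOLP sentence in a Mkrtychev model. -/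
noncomputable def MModel.SatSentence {CS : Set (ℕ × Fm Empty)} {D : Type}
    (M : MModel CS D) (F : Fm Empty) : Prop := M.Sat (toK F)

/-- A sentence is `FOLP_CS`-valid if it is true in every Mkrtychev model of `FOLP_CS`. -/
def FOLPValid (CS : Set (ℕ × Fm Empty)) (F : Fm Empty) : Prop :=
  ∀ (D : Type) (M : MModel CS D), M.SatSentence F

/-- Satisfiability of a closed Par-formula `A(u₁,…,uₙ)` in a model:
`M ⊩ A(a₁,…,aₙ)` for some `a₁,…,aₙ ∈ D`. -/
noncomputable def MModel.SatPar {CS : Set (ℕ × Fm Empty)} {D : Type}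
    (M : MModel CS D) (F : Fm ℕ) : Prop :=
  ∃ g : ℕ → D, M.Sat (F.kmap g)

/-- `X ⊆ Par`: the set `X` consists of parameters only. -/
def XPar (X : Finset (ℕ ⊕ ℕ)) : Prop := ∀ s ∈ X, ∃ u : ℕ, s = Sum.inr u

/-- One application of an FOLP tableau rule to a branch (represented by the set `S`
of closed Par-formulas occurring on it), producing the list of extended branches
(one branch for a non-branching rule, two for a branching rule). -/
inductive TabRule : Set (Fm ℕ) → List (Set (Fm ℕ)) → Prop
  | fneg {S A} : Fm.neg (Fm.neg A) ∈ S → TabRule S [insert A S]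
  | timp {S A B} : Fm.imp A B ∈ S → TabRule S [insert (Fm.neg A) S, insert B S]
  | fimp {S A B} : Fm.neg (Fm.imp A B) ∈ S → TabRule S [insert A (insert (Fm.neg B) S)]
  | tall {S x A} (u : ℕ) : Fm.all x A ∈ S → TabRule S [insert (A.subst1 x u) S]
  | fex {S x A} (u : ℕ) : Fm.neg (Fm.ex x A) ∈ S →
      TabRule S [insert (Fm.neg (A.subst1 x u)) S]
  | tex {S x A} (u : ℕ) : Fm.ex x A ∈ S → (∀ F ∈ S, u ∉ F.kocc) →
      TabRule S [insert (A.subst1 x u) S]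
  | fall {S x A} (u : ℕ) : Fm.neg (Fm.all x A) ∈ S → (∀ F ∈ S, u ∉ F.kocc) →
      TabRule S [insert (Fm.neg (A.subst1 x u)) S]
  | tcolon {S t X A} : Fm.just t X A ∈ S → XPar X → TabRule S [insert A.univClosure S]
  | fplus {S t s X A} : Fm.neg (Fm.just (Tm.plus t s) X A) ∈ S → XPar X →
      TabRule S [insert (Fm.neg (Fm.just t X A)) (insert (Fm.neg (Fm.just s X A)) S)]
  | fapp {S s t X B} (A : Fm ℕ) : Fm.neg (Fm.just (Tm.app s t) X B) ∈ S → XPar X →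
      (∀ u ∈ A.kocc, Sum.inr u ∈ X) →
      TabRule S [insert (Fm.neg (Fm.just s X (A.imp B))) S,
                 insert (Fm.neg (Fm.just t X A)) S]
  | fbang {S t X A} : Fm.neg (Fm.just (Tm.bang t) X (Fm.just t X A)) ∈ S → XPar X →
      TabRule S [insert (Fm.neg (Fm.just t X A)) S]
  | ctr {S t X A} (u : ℕ) : Fm.neg (Fm.just t X A) ∈ S → XPar X → Sum.inr u ∉ X →
      TabRule S [insert (Fm.neg (Fm.just t (insert (Sum.inr u) X) A)) S]
  | exp {S t X A} (u : ℕ) : Fm.neg (Fm.just t (insert (Sum.inr u) X) A) ∈ S →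
      XPar X → Sum.inr u ∉ X → u ∉ A.kocc →
      TabRule S [insert (Fm.neg (Fm.just t X A)) S]
  | ins {S t X A} (x u : ℕ) : Fm.neg (Fm.just t X (A.subst1 x u)) ∈ S → XPar X →
      TabRule S [insert (Fm.neg (Fm.just t X A)) S]
  | genx {S t X A x} : Fm.neg (Fm.just (Tm.gen x t) X (Fm.all x A)) ∈ S → XPar X →
      TabRule S [insert (Fm.neg (Fm.just t X A)) S]

/-- `ClosedTableau CS S`: there is a closed `FOLP_CS`-tableau beginning with the
formulas of `S`.  A branch closes if it contains both `A` and `¬A`, or contains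
`¬c:A` with `c:A ∈ CS`. -/
inductive ClosedTableau (CS : Set (ℕ × Fm Empty)) : Set (Fm ℕ) → Prop
  | close {S A} : A ∈ S → Fm.neg A ∈ S → ClosedTableau CS S
  | closeCS {S c A} : (c, A) ∈ CS →
      Fm.neg (Fm.just (Tm.jconst c) ∅ (toK A)) ∈ S → ClosedTableau CS S
  | step {S l} : TabRule S l → (∀ S' ∈ l, ClosedTableau CS S') → ClosedTableau CS S

/-- An `FOLP_CS`-tableau proof of the sentence `F`: a closed tableau beginning
with `¬F`. -/
def TabProof (CS : Set (ℕ × Fm Empty)) (F : Fm Empty) : Prop :=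
  ClosedTableau CS {Fm.neg (toK F)}

/-- A set of closed Par-formulas is tableau `FOLP_CS`-consistent if no finite
subset of it has a closed `FOLP_CS`-tableau. -/
def TabConsistent (CS : Set (ℕ × Fm Empty)) (Γ : Set (Fm ℕ)) : Prop :=
  ∀ S : Set (Fm ℕ), S ⊆ Γ → S.Finite → ¬ ClosedTableau CS S

/-- `Γ` is maximal: it has no proper tableau consistent extension by closed Par-formulas. -/
def MaximalCons (CS : Set (ℕ × Fm Empty)) (Γ : Set (Fm ℕ)) : Prop :=
  TabConsistent CS Γ ∧
    ∀ Δ : Set (Fm ℕ), Γ ⊆ Δ → (∀ F ∈ Δ, F.Closed) → TabConsistent CS Δ → Δ = Γ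

/-- `Γ` is E-complete (with parameters as witnesses). -/
def EComplete (Γ : Set (Fm ℕ)) : Prop :=
  (∀ (x : ℕ) (A : Fm ℕ), Fm.ex x A ∈ Γ → ∃ u : ℕ, A.subst1 x u ∈ Γ) ∧
  (∀ (x : ℕ) (A : Fm ℕ), Fm.neg (Fm.all x A) ∈ Γ → ∃ u : ℕ, Fm.neg (A.subst1 x u) ∈ Γ)

/-- The interpretation of the canonical model determined by `Γ`:
`I(Q) = { (u₁,…,uₙ) | Q(u₁,…,uₙ) ∈ Γ }`. -/
def canI (Γ : Set (Fm ℕ)) (Q : ℕ) : Set (List ℕ) :=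
  {us | Fm.pred Q (us.map Sum.inr) ∈ Γ}

/-- The evidence function of the canonical model determined by `Γ`:
`E(t) = { A | ¬ t:_{Par(A)} A ∉ Γ }`. -/
def canE (Γ : Set (Fm ℕ)) (t : Tm) : Set (Fm ℕ) :=
  {A | Fm.neg (Fm.just t (A.kocc.image Sum.inr) A) ∉ Γ}

/-! If `B ∉ E(s·t)`, then `¬(s·t):_{Par(B)} B ∈ Γ`. A maximal consistent `Γ` is closed under the
one-branch tableau rules and contains one of the two branches of every branching rule, so (Ctr)
enlarges the subscript to `Par(A→B)`, (F·) gives `¬s:_{Par(A→B)}(A→B) ∈ Γ` or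
`¬t:_{Par(A→B)} A ∈ Γ`, and (Exp) shrinks the latter to `¬t:_{Par(A)} A ∈ Γ`; both contradict the
hypotheses. Closure under the rules needs closed tableaux to stay closed when a branch is
enlarged; for the eigenparameter rules this is done by swapping the eigenparameter with one that
is fresh for the larger branch. -/
namespace Fm

variable {K K' K'' : Type}

@[simp] lemma mem_rightFinset {W : Finset (ℕ ⊕ K)} {a : K} :
    a ∈ (W.toList.filterMap Sum.getRight?).toFinset ↔ Sum.inr a ∈ W := by
  simp [Sum.getRight?_eq_some_iff]

lemma kocc_kmap (f : K → K') (A : Fm K) : (A.kmap f).kocc = A.kocc.image f := by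
  induction A with
  | pred Q args => ext a; simp [kmap, kocc, Sum.getRight?_eq_some_iff]
  | neg A ih => simpa [kmap, kocc] using ih
  | imp A B ihA ihB => simp [kmap, kocc, ihA, ihB, Finset.image_union]
  | all x A ih => simpa [kmap, kocc] using ih
  | ex x A ih => simpa [kmap, kocc] using ih
  | just t X A ih => ext a; simp [kmap, kocc, ih, or_and_right, exists_or]

lemma fvar_kmap (f : K → K') (A : Fm K) : (A.kmap f).fvar = A.fvar := by
  induction A with
  | pred Q args => ext x; simp [kmap, fvar, Sum.getLeft?_eq_some_iff]
  | neg A ih => simpa [kmap, fvar] using ih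
  | imp A B ihA ihB => simp [kmap, fvar, ihA, ihB]
  | all x A ih => simp [kmap, fvar, ih]
  | ex x A ih => simp [kmap, fvar, ih]
  | just t X A ih => ext x; simp [kmap, fvar]

lemma kmap_eq_self {f : K → K} {A : Fm K} (h : ∀ a ∈ A.kocc, f a = a) : A.kmap f = A := by
  induction A with
  | pred Q args =>
      simp only [kmap, pred.injEq, true_and]
      refine List.map_congr_left (g := id) (fun s hs => ?_) |>.trans (List.map_id args)
      cases s with
      | inl x => rfl
      | inr a => simp [h a (by simpa [kocc, Sum.getRight?_eq_some_iff] using hs)]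
  | neg A ih => simpa [kmap] using ih h
  | imp A B ihA ihB =>
      simp only [kocc, Finset.mem_union] at h
      simp [kmap, ihA fun a ha => h a (.inl ha), ihB fun a ha => h a (.inr ha)]
  | all x A ih => simpa [kmap] using ih h
  | ex x A ih => simpa [kmap] using ih h
  | just t X A ih =>
      simp only [kocc, Finset.mem_union, mem_rightFinset] at h
      simp only [kmap, just.injEq, true_and, ih fun a ha => h a (.inl ha), and_true]
      refine Finset.image_congr (g := id) (fun s hs => ?_) |>.trans Finset.image_id
      cases s with
      | inl x => rfl
      | inr a => simp [h a (.inr hs)]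

lemma kmap_kmap (f : K' → K'') (g : K → K') (A : Fm K) :
    (A.kmap g).kmap f = A.kmap (f ∘ g) := by
  induction A with
  | pred Q args => simp [kmap]
  | neg A ih => simp [kmap, ih]
  | imp A B ihA ihB => simp [kmap, ihA, ihB]
  | all x A ih => simp [kmap, ih]
  | ex x A ih => simp [kmap, ih]
  | just t X A ih => simp [kmap, ih, Finset.image_image]

lemma map_comp_subK (f : K → K') (σ : ℕ → Option K) :
    Sum.map id f ∘ subK σ = subK (fun y => (σ y).map f) ∘ Sum.map id f := by
  funext s
  rcases s with x | a
  · cases h : σ x <;> simp [subK, h]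
  · rfl

lemma kmap_msubst (f : K → K') (σ : ℕ → Option K) (A : Fm K) :
    (A.msubst σ).kmap f = (A.kmap f).msubst (fun y => (σ y).map f) := by
  induction A generalizing σ with
  | pred Q args => simp [msubst, kmap, map_comp_subK]
  | neg A ih => simp [msubst, kmap, ih]
  | imp A B ihA ihB => simp [msubst, kmap, ihA, ihB]
  | all x A ih => simp [msubst, kmap, ih, apply_ite]
  | ex x A ih => simp [msubst, kmap, ih, apply_ite]
  | just t X A ih => simp [msubst, kmap, ih, apply_ite, Finset.image_image, map_comp_subK]

lemma kmap_subst1 (f : K → K') (x : ℕ) (a : K) (A : Fm K) :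
    (A.subst1 x a).kmap f = (A.kmap f).subst1 x (f a) := by
  simp [subst1, kmap_msubst, apply_ite]

lemma kmap_univClosure (f : K → K') (A : Fm K) :
    A.univClosure.kmap f = (A.kmap f).univClosure := by
  rw [univClosure, univClosure, fvar_kmap]
  induction A.fvar.sort (· ≤ ·) <;> simp_all [kmap]

lemma kmap_swap_kmap_swap (u v : ℕ) (A : Fm ℕ) :
    (A.kmap (Equiv.swap u v)).kmap (Equiv.swap u v) = A := by
  rw [kmap_kmap]
  exact kmap_eq_self fun a _ => Equiv.swap_apply_self u v a

lemma kmap_swap_eq_self {u v : ℕ} {A : Fm ℕ} (hu : u ∉ A.kocc) (hv : v ∉ A.kocc) :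
    A.kmap (Equiv.swap u v) = A :=
  kmap_eq_self fun _ ha => Equiv.swap_apply_of_ne_of_ne (ne_of_mem_of_not_mem ha hu)
    (ne_of_mem_of_not_mem ha hv)

lemma kmap_toK (f : K → K') (A : Fm Empty) : (toK A : Fm K).kmap f = toK A := by
  rw [toK, toK, kmap_kmap]
  congr 1
  funext a
  exact a.elim

end Fm

/- The instance is left implicit: `Fm.kmap` forms its images with the classical instance on
`ℕ ⊕ K'`, which is not definitionally the derived one on `ℕ ⊕ ℕ`. -/
lemma XPar.image_map {X : Finset (ℕ ⊕ ℕ)} (hX : XPar X) (g : ℕ → ℕ)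
    {_ : DecidableEq (ℕ ⊕ ℕ)} : XPar (X.image (Sum.map id g)) := by
  intro s hs
  obtain ⟨a, ha, rfl⟩ := Finset.mem_image.mp hs
  obtain ⟨u, rfl⟩ := hX a ha
  exact ⟨g u, rfl⟩

lemma inr_mem_image_map_iff {X : Finset (ℕ ⊕ ℕ)} {g : ℕ → ℕ} (hg : g.Injective)
    {_ : DecidableEq (ℕ ⊕ ℕ)} {u : ℕ} :
    Sum.inr (g u) ∈ X.image (Sum.map id g) ↔ Sum.inr u ∈ X := by
  simp [hg.eq_iff]

theorem TabRule.kmap {g : ℕ → ℕ} (hg : g.Injective) {S : Set (Fm ℕ)}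
    {l : List (Set (Fm ℕ))} (h : TabRule S l) :
    TabRule (Fm.kmap g '' S) (l.map (Set.image (Fm.kmap g))) := by
  have mem {F} (hF : F ∈ S) : F.kmap g ∈ Fm.kmap g '' S := Set.mem_image_of_mem _ hF
  have fresh {u} (hu : ∀ F ∈ S, u ∉ F.kocc) : ∀ F ∈ Fm.kmap g '' S, g u ∉ F.kocc := by
    rintro _ ⟨F, hF, rfl⟩
    simpa [Fm.kocc_kmap, hg.eq_iff] using hu F hF
  cases h <;>
    simp only [List.map_cons, List.map_nil, Set.image_insert_eq, Fm.kmap, Fm.kmap_subst1,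
      Fm.kmap_univClosure]
  case fneg h => exact .fneg (mem h)
  case timp h => exact .timp (mem h)
  case fimp h => exact .fimp (mem h)
  case tall u h => exact .tall (g u) (mem h)
  case fex u h => exact .fex (g u) (mem h)
  case tex u h hu => exact .tex (g u) (mem h) (fresh hu)
  case fall u h hu => exact .fall (g u) (mem h) (fresh hu)
  case tcolon h hX => exact .tcolon (mem h) (hX.image_map g)
  case fplus h hX => exact .fplus (mem h) (hX.image_map g)
  case fapp A h hX hA =>
    refine .fapp (A.kmap g) (mem h) (hX.image_map g) fun v hv => ?_
    rw [Fm.kocc_kmap] at hv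
    obtain ⟨a, ha, rfl⟩ : ∃ a ∈ A.kocc, g a = v := by simpa using hv
    exact (inr_mem_image_map_iff hg).mpr (hA a ha)
  case fbang h hX => exact .fbang (mem h) (hX.image_map g)
  case ctr u h hX hu =>
    have := TabRule.ctr (g u) (mem h) (hX.image_map g) ((inr_mem_image_map_iff hg).not.mpr hu)
    convert this using 6
    ext; simp
  case exp u h hX hu hA =>
    have h' := mem h
    simp only [Fm.kmap] at h'
    refine .exp (g u) (by convert h' using 4; ext; simp) (hX.image_map g)
      ((inr_mem_image_map_iff hg).not.mpr hu) ?_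
    simpa [Fm.kocc_kmap, hg.eq_iff] using hA
  case ins x u h hX =>
    have h' := mem h
    simp only [Fm.kmap, Fm.kmap_subst1] at h'
    exact .ins x (g u) h' (hX.image_map g)
  case genx h hX => exact .genx (mem h) (hX.image_map g)

theorem exists_fresh_param (S : Set (Fm ℕ)) (hfin : S.Finite) : ∃ v : ℕ, ∀ F ∈ S, v ∉ F.kocc := by
  obtain ⟨v, hv⟩ := Infinite.exists_notMem_finset (hfin.toFinset.sup Fm.kocc)
  exact ⟨v, fun F hF hvF => hv (Finset.le_sup (f := Fm.kocc) (hfin.mem_toFinset.mpr hF) hvF)⟩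

namespace ClosedTableau

variable {CS : Set (ℕ × Fm Empty)} {S : Set (Fm ℕ)}

theorem step_singleton {T : Set (Fm ℕ)} (hr : TabRule S [T]) (hT : ClosedTableau CS T) :
    ClosedTableau CS S :=
  .step hr fun _ h => List.mem_singleton.mp h ▸ hT

theorem step_pair {T₁ T₂ : Set (Fm ℕ)} (hr : TabRule S [T₁, T₂]) (h₁ : ClosedTableau CS T₁)
    (h₂ : ClosedTableau CS T₂) : ClosedTableau CS S :=
  .step hr fun _ h => by rcases List.mem_pair.mp h with rfl | rfl <;> assumption

theorem kmap {g : ℕ → ℕ} (hg : g.Injective) (h : ClosedTableau CS S) :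
    ClosedTableau CS (Fm.kmap g '' S) := by
  induction h with
  | close hA hnA => exact .close (Set.mem_image_of_mem _ hA) (Set.mem_image_of_mem _ hnA)
  | closeCS hc h =>
      refine .closeCS hc ?_
      simpa [Fm.kmap, Fm.kmap_toK] using Set.mem_image_of_mem (Fm.kmap g) h
  | step hr _ ih =>
      refine .step (hr.kmap hg) fun _ hT => ?_
      obtain ⟨T, hTl, rfl⟩ := List.mem_map.mp hT
      exact ih T hTl

theorem insert_kmap_swap {S' : Set (Fm ℕ)} {G : Fm ℕ} {u v : ℕ}
    (hG : ∀ {S''}, insert G S ⊆ S'' → S''.Finite → ClosedTableau CS S'')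
    (hS : S ⊆ S') (hfin : S'.Finite) (hu : ∀ F ∈ S, u ∉ F.kocc) (hv : ∀ F ∈ S', v ∉ F.kocc) :
    ClosedTableau CS (insert (G.kmap (Equiv.swap u v)) S') := by
  have hsub : insert G S ⊆ Fm.kmap (Equiv.swap u v) '' insert (G.kmap (Equiv.swap u v)) S' := by
    rw [Set.image_insert_eq, Fm.kmap_swap_kmap_swap]
    exact Set.insert_subset_insert fun F hF =>
      ⟨F, hS hF, Fm.kmap_swap_eq_self (hu F hF) (hv F (hS hF))⟩
  have := (hG hsub ((hfin.insert _).image _)).kmap (Equiv.swap u v).injective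
  simpa [Set.image_image, Fm.kmap_swap_kmap_swap] using this

theorem mono (h : ClosedTableau CS S) : ∀ {S'}, S ⊆ S' → S'.Finite → ClosedTableau CS S' := by
  induction h with
  | close hA hnA => exact fun hS _ => .close (hS hA) (hS hnA)
  | closeCS hc h => exact fun hS _ => .closeCS hc (hS h)
  | @step S l hr _ ih =>
    intro S' hS hfin
    have ext1 {F} (hF : insert F S ∈ l) : ClosedTableau CS (insert F S') :=
      ih _ hF (Set.insert_subset_insert hS) (hfin.insert F)
    have ext2 {F G} (hF : insert F (insert G S) ∈ l) :
        ClosedTableau CS (insert F (insert G S')) :=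
      ih _ hF (Set.insert_subset_insert (Set.insert_subset_insert hS)) ((hfin.insert G).insert F)
    obtain ⟨v, hv⟩ := exists_fresh_param S' hfin
    cases hr with
    | fneg h => exact step_singleton (.fneg (hS h)) (ext1 (by simp))
    | timp h => exact step_pair (.timp (hS h)) (ext1 (by simp)) (ext1 (by simp))
    | fimp h => exact step_singleton (.fimp (hS h)) (ext2 (by simp))
    | tall u h => exact step_singleton (.tall u (hS h)) (ext1 (by simp))
    | fex u h => exact step_singleton (.fex u (hS h)) (ext1 (by simp))
    | @tex x A u h hu =>
      have hA : A.kmap (Equiv.swap u v) = A :=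
        Fm.kmap_swap_eq_self (fun h' => hu _ h (by simpa [Fm.kocc] using h'))
          (fun h' => hv _ (hS h) (by simpa [Fm.kocc] using h'))
      have := insert_kmap_swap (ih _ (List.mem_singleton_self _)) hS hfin hu hv
      rw [Fm.kmap_subst1, hA, Equiv.swap_apply_left] at this
      exact step_singleton (.tex v (hS h) hv) this
    | @fall x A u h hu =>
      have hA : A.kmap (Equiv.swap u v) = A :=
        Fm.kmap_swap_eq_self (fun h' => hu _ h (by simpa [Fm.kocc] using h'))
          (fun h' => hv _ (hS h) (by simpa [Fm.kocc] using h'))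
      have := insert_kmap_swap (ih _ (List.mem_singleton_self _)) hS hfin hu hv
      rw [Fm.kmap, Fm.kmap_subst1, hA, Equiv.swap_apply_left] at this
      exact step_singleton (.fall v (hS h) hv) this
    | tcolon h hX => exact step_singleton (.tcolon (hS h) hX) (ext1 (by simp))
    | fplus h hX => exact step_singleton (.fplus (hS h) hX) (ext2 (by simp))
    | fapp A h hX hA =>
      exact step_pair (.fapp A (hS h) hX hA) (ext1 (by simp)) (ext1 (by simp))
    | fbang h hX => exact step_singleton (.fbang (hS h) hX) (ext1 (by simp))
    | ctr u h hX hu => exact step_singleton (.ctr u (hS h) hX hu) (ext1 (by simp))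
    | exp u h hX hu hA => exact step_singleton (.exp u (hS h) hX hu hA) (ext1 (by simp))
    | ins x u h hX => exact step_singleton (.ins x u (hS h) hX) (ext1 (by simp))
    | genx h hX => exact step_singleton (.genx (hS h) hX) (ext1 (by simp))

end ClosedTableau

lemma Fm.closed_neg_just (t : Tm) (W : Finset ℕ) (A : Fm ℕ) :
    (Fm.neg (Fm.just t (W.image Sum.inr) A)).Closed := by
  simp [Fm.Closed, Fm.fvar, Finset.eq_empty_iff_forall_notMem]

lemma xPar_image_inr (W : Finset ℕ) : XPar (W.image Sum.inr) := by
  simp [XPar]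

namespace MaximalCons

variable {CS : Set (ℕ × Fm Empty)} {Γ : Set (Fm ℕ)}

theorem exists_closedTableau_insert (hmax : MaximalCons CS Γ) (hclosed : ∀ F ∈ Γ, F.Closed)
    {F : Fm ℕ} (hF : F.Closed) (hFΓ : F ∉ Γ) :
    ∃ T ⊆ Γ, T.Finite ∧ ClosedTableau CS (insert F T) := by
  have hincons : ¬ TabConsistent CS (insert F Γ) := fun hcons =>
    hFΓ (hmax.2 _ (Set.subset_insert F Γ) (Set.forall_mem_insert.mpr ⟨hF, hclosed⟩) hcons ▸
      Set.mem_insert F Γ)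
  simp only [TabConsistent, not_forall, not_not] at hincons
  obtain ⟨T, hT, hTfin, hct⟩ := hincons
  refine ⟨T \ {F}, Set.sdiff_singleton_subset_iff.mpr hT, hTfin.sdiff, ?_⟩
  rw [Set.insert_sdiff_singleton]
  exact hct.mono (Set.subset_insert F T) (hTfin.insert F)

theorem mem_of_rule (hmax : MaximalCons CS Γ) (hclosed : ∀ F ∈ Γ, F.Closed) {G G' : Fm ℕ}
    (hG : G ∈ Γ) (hG' : G'.Closed) (hr : ∀ S, G ∈ S → TabRule S [insert G' S]) : G' ∈ Γ := by
  by_contra hG'Γ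
  obtain ⟨T, hTΓ, hTfin, hct⟩ := hmax.exists_closedTableau_insert hclosed hG' hG'Γ
  refine hmax.1 (insert G T) (Set.insert_subset hG hTΓ) (hTfin.insert G) ?_
  refine .step_singleton (hr _ (Set.mem_insert G T)) (hct.mono ?_ ((hTfin.insert G).insert G'))
  exact Set.insert_subset_insert (Set.subset_insert G T)

theorem mem_or_mem_of_rule (hmax : MaximalCons CS Γ) (hclosed : ∀ F ∈ Γ, F.Closed)
    {G G₁ G₂ : Fm ℕ} (hG : G ∈ Γ) (hG₁ : G₁.Closed) (hG₂ : G₂.Closed)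
    (hr : ∀ S, G ∈ S → TabRule S [insert G₁ S, insert G₂ S]) : G₁ ∈ Γ ∨ G₂ ∈ Γ := by
  by_contra! ⟨hG₁Γ, hG₂Γ⟩
  obtain ⟨T₁, hT₁Γ, hT₁fin, hct₁⟩ := hmax.exists_closedTableau_insert hclosed hG₁ hG₁Γ
  obtain ⟨T₂, hT₂Γ, hT₂fin, hct₂⟩ := hmax.exists_closedTableau_insert hclosed hG₂ hG₂Γ
  set T := insert G (T₁ ∪ T₂)
  have hTfin : T.Finite := (hT₁fin.union hT₂fin).insert G
  refine hmax.1 T (Set.insert_subset hG (Set.union_subset hT₁Γ hT₂Γ)) hTfin ?_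
  refine .step_pair (hr T (Set.mem_insert G _)) ?_ ?_
  · exact hct₁.mono (Set.insert_subset_insert (by intro F hF; simp [T, hF])) (hTfin.insert G₁)
  · exact hct₂.mono (Set.insert_subset_insert (by intro F hF; simp [T, hF])) (hTfin.insert G₂)


theorem neg_just_mem_of_subset (hmax : MaximalCons CS Γ) (hclosed : ∀ F ∈ Γ, F.Closed)
    {t : Tm} {A : Fm ℕ} {W Z : Finset ℕ}
    (h : Fm.neg (Fm.just t (W.image Sum.inr) A) ∈ Γ) (hWZ : W ⊆ Z) :
    Fm.neg (Fm.just t (Z.image Sum.inr) A) ∈ Γ := by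
  rw [← Finset.union_eq_right.mpr hWZ]
  clear hWZ
  induction Z using Finset.induction_on with
  | empty => simpa using h
  | @insert u Z _ ih =>
    rw [Finset.union_insert]
    by_cases hu : u ∈ W ∪ Z
    · rwa [Finset.insert_eq_of_mem hu]
    refine hmax.mem_of_rule hclosed ih (Fm.closed_neg_just _ _ _) fun S hS => ?_
    rw [Finset.image_insert]
    exact .ctr u hS (xPar_image_inr _) (by simpa using hu)

theorem neg_just_mem_of_superset (hmax : MaximalCons CS Γ) (hclosed : ∀ F ∈ Γ, F.Closed)
    {t : Tm} {A : Fm ℕ} {W Z : Finset ℕ}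
    (h : Fm.neg (Fm.just t (Z.image Sum.inr) A) ∈ Γ) (hA : A.kocc ⊆ W) (hWZ : W ⊆ Z) :
    Fm.neg (Fm.just t (W.image Sum.inr) A) ∈ Γ := by
  rw [← Finset.union_eq_right.mpr hWZ] at h
  clear hWZ
  induction Z using Finset.induction_on with
  | empty => simpa using h
  | @insert u Z _ ih =>
    rw [Finset.union_insert] at h
    by_cases hu : u ∈ W ∪ Z
    · rw [Finset.insert_eq_of_mem hu] at h
      exact ih h
    refine ih (hmax.mem_of_rule hclosed h (Fm.closed_neg_just _ _ _) fun S hS => ?_)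
    rw [Finset.image_insert] at hS
    exact .exp u hS (xPar_image_inr _) (by simpa using hu) fun huA => hu (by simp [hA huA])

end MaximalCons

theorem canonical_E2_general
    (CS : Set (ℕ × Fm Empty))
    (Γ : Set (Fm ℕ)) (hclosed : ∀ F ∈ Γ, F.Closed)
    (hmax : MaximalCons CS Γ)
    (s t : Tm) (A B : Fm ℕ)
    (hA : A ∈ canE Γ t) (hAB : Fm.imp A B ∈ canE Γ s) :
    B ∈ canE Γ (Tm.app s t) := by
  intro hB
  set W := (Fm.imp A B).kocc
  have hAW : A.kocc ⊆ W := fun a ha => by simp [W, Fm.kocc, ha]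
  have hBW : B.kocc ⊆ W := fun a ha => by simp [W, Fm.kocc, ha]
  have hW : Fm.neg (Fm.just (Tm.app s t) (W.image Sum.inr) B) ∈ Γ :=
    hmax.neg_just_mem_of_subset hclosed hB hBW
  have hsplit (S : Set (Fm ℕ)) (hS : Fm.neg (Fm.just (Tm.app s t) (W.image Sum.inr) B) ∈ S) :=
    TabRule.fapp A hS (xPar_image_inr W) fun u hu => by simpa using hAW hu
  rcases hmax.mem_or_mem_of_rule hclosed hW (Fm.closed_neg_just _ _ _)
      (Fm.closed_neg_just _ _ _) hsplit with hs | ht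
  · exact hAB hs
  · exact hA (hmax.neg_just_mem_of_superset hclosed ht subset_rfl hAW)

/-- condition E2 for the canonical evidence function
`E(t) = {A | ¬t:_{Par(A)} A ∉ Γ}`. -/
theorem canonical_E2
    (CS : Set (ℕ × Fm Empty)) (hCS : ConstantSpec CS)
    (Γ : Set (Fm ℕ)) (hclosed : ∀ F ∈ Γ, F.Closed)
    (hmax : MaximalCons CS Γ) (hE : EComplete Γ)
    (s t : Tm) (A B : Fm ℕ)
    (hA : A ∈ canE Γ t) (hAB : Fm.imp A B ∈ canE Γ s) :
    B ∈ canE Γ (Tm.app s t) :=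
  canonical_E2_general CS Γ hclosed hmax s t A B hA hAB
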